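/- For every real number x ≥ 1 and natural number n ≥ 1 with x ≤ n: the sum Σ_{j ≥ 0} min{s, n/2^{j/2}} over integers j, where s = n/x, satisfies Σ_j min{s, n/2^{j/2}} (summed for j from 0 to 2·log₂ n) ≤ C · s · (log₂(n/s) + 1) for some absolute constant C. -/

import Mathlib

/-!
Below level `K = ⌈2 log₂ x⌉` each term is bounded by `s = n / x`, contributing `K s`; from level `K`
on the terms `n / √2 ^ j` are at most `s` and decay geometrically with ratio `1 / √2`, so the
tail contributes at most `s / (1 - 1 / √2) ≤ 4 s`.
-/

open Finset

theorem sum_range_min_geometric_le {𝕜 : Type*} [Field 𝕜] [LinearOrder 𝕜] [IsStrictOrderedRing 𝕜]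
    {s a r : 𝕜} (hs : 0 ≤ s) (ha : 0 ≤ a) (hr₀ : 0 ≤ r) (hr₁ : r < 1) {k : ℕ}
    (hk : a * r ^ k ≤ s) (N : ℕ) :
    ∑ j ∈ range N, min s (a * r ^ j) ≤ s * (k + (1 - r)⁻¹) := by
  calc ∑ j ∈ range N, min s (a * r ^ j)
      ≤ ∑ j ∈ range (k + N), min s (a * r ^ j) :=
        sum_le_sum_of_subset_of_nonneg (range_subset_range.2 (by omega))
          fun _ _ _ => le_min hs (by positivity)
    _ = ∑ j ∈ range k, min s (a * r ^ j) + ∑ j ∈ Ico k (k + N), min s (a * r ^ j) :=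
        (sum_range_add_sum_Ico _ (by omega)).symm
    _ ≤ ∑ _j ∈ range k, s + ∑ j ∈ Ico k (k + N), a * r ^ j :=
        add_le_add (sum_le_sum fun _ _ => min_le_left _ _)
          (sum_le_sum fun _ _ => min_le_right _ _)
    _ ≤ k * s + a * (r ^ k / (1 - r)) := by
        rw [sum_const, card_range, nsmul_eq_mul, ← mul_sum]
        gcongr
        exact geom_sum_Ico_le_of_lt_one hr₀ hr₁
    _ = k * s + a * r ^ k * (1 - r)⁻¹ := by rw [div_eq_mul_inv, mul_assoc]
    _ ≤ k * s + s * (1 - r)⁻¹ := by gcongr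
    _ = s * (k + (1 - r)⁻¹) := by ring

theorem Real.two_rpow_natCast_div_two (j : ℕ) : (2 : ℝ) ^ ((j : ℝ) / 2) = √2 ^ j := by
  rw [Real.sqrt_eq_rpow, ← Real.rpow_natCast, ← Real.rpow_mul (by norm_num)]
  ring_nf

theorem Real.le_sqrt_two_pow_ceil_two_mul_logb {x : ℝ} (hx : 0 < x) :
    x ≤ √2 ^ ⌈2 * Real.logb 2 x⌉₊ := by
  calc x = 2 ^ Real.logb 2 x := (Real.rpow_logb (by norm_num) (by norm_num) hx).symm
    _ ≤ 2 ^ ((⌈2 * Real.logb 2 x⌉₊ : ℝ) / 2) := by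
        apply Real.rpow_le_rpow_of_exponent_le (by norm_num)
        linarith [Nat.le_ceil (2 * Real.logb 2 x)]
    _ = √2 ^ ⌈2 * Real.logb 2 x⌉₊ := Real.two_rpow_natCast_div_two _

theorem Real.inv_one_sub_inv_sqrt_two_le : (1 - (√2)⁻¹)⁻¹ ≤ 4 := by
  have h : (4 / 3 : ℝ) ≤ √2 := (Real.le_sqrt (by norm_num) (by norm_num)).2 (by norm_num)
  have h' : (√2)⁻¹ ≤ 3 / 4 := by
    rw [inv_le_comm₀ (by positivity) (by norm_num)]
    linarith
  rw [inv_le_comm₀ (by linarith) (by norm_num)]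
  linarith

theorem stmt9 : ∃ C : ℝ, 0 < C ∧
    ∀ (n : ℕ) (x : ℝ), 1 ≤ n → 1 ≤ x → x ≤ (n : ℝ) →
      (∑ j ∈ Finset.range (⌊2 * Real.logb 2 (n : ℝ)⌋₊ + 1),
          min ((n : ℝ) / x) ((n : ℝ) / (2 : ℝ) ^ ((j : ℝ) / 2)))
        ≤ C * ((n : ℝ) / x) * (Real.logb 2 x + 1) := by
  refine ⟨5, by norm_num, fun n x _ hx _ => ?_⟩
  have hx₀ : 0 < x := by linarith
  have hs : 0 ≤ (n : ℝ) / x := by positivity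
  have hL : 0 ≤ Real.logb 2 x := Real.logb_nonneg (by norm_num) hx
  have hK : (⌈2 * Real.logb 2 x⌉₊ : ℝ) ≤ 2 * Real.logb 2 x + 1 :=
    (Nat.ceil_lt_add_one (by positivity)).le
  have hdecay : (n : ℝ) * (√2)⁻¹ ^ ⌈2 * Real.logb 2 x⌉₊ ≤ n / x := by
    rw [inv_pow, ← div_eq_mul_inv]
    exact div_le_div_of_nonneg_left (Nat.cast_nonneg _) hx₀
      (Real.le_sqrt_two_pow_ceil_two_mul_logb hx₀)
  simp_rw [Real.two_rpow_natCast_div_two, div_eq_mul_inv (n : ℝ) (√2 ^ _), ← inv_pow]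
  calc _ ≤ n / x * (⌈2 * Real.logb 2 x⌉₊ + (1 - (√2)⁻¹)⁻¹) :=
        sum_range_min_geometric_le hs (Nat.cast_nonneg _) (by positivity)
          (inv_lt_one_of_one_lt₀ Real.one_lt_sqrt_two) hdecay _
    _ ≤ n / x * (2 * Real.logb 2 x + 1 + 4) := by
        gcongr
        exact Real.inv_one_sub_inv_sqrt_two_le
    _ ≤ 5 * (n / x) * (Real.logb 2 x + 1) := by nlinarith
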